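/- Let k' be a field, 𝓖 = ⊕_{r≥1} (t^{a_r}) W^r ⊆ k'[[t]][W] a Rees algebra with a_r ≥ r, and let Δ^r denote the Hasse–Schmidt derivatives on k'[[t]] (from t ↦ t+U). If t^a W^b ∈ 𝓖 with a ≥ b > r ≥ 0, then Δ^r(t^a) W^{b−r} = c · t^{a−r} W^{b−r} for some c ∈ k', and (a−r)/(b−r) ≥ a/b. Consequently λ_{G(𝓖)} = λ_𝓖, where G(𝓖) is the algebra generated by 𝓖 together with all such derivative elements, and hence 𝓖 and G(𝓖) have the same integral closure in k'[[t]][W]. -/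

import Mathlib

/-!
Every generator `Δ^r(t^{a_m}) W^{m-r}` of `G(𝓖)` is a scalar multiple of `t^{a_m - r} W^{m-r}`,
whose `m`-th power `t^{(a_m - r) m} W^{(m-r) m}` lies in `𝓖`: subadditivity gives
`a_{(m-r) m} ≤ (m-r) a_m`, and `(m-r) a_m ≤ (a_m - r) m` is the slope inequality, which holds
because `m ≤ a_m`. So `𝓖 ⊆ G(𝓖)` is an integral extension and the two algebras have the same
integral closure.
-/

set_option synthInstance.maxHeartbeats 400000

open Polynomial

/-- The Rees algebra of a filtration `I` of ideals of `B`. -/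
noncomputable def ReesAlg {B : Type*} [CommRing B] (I : ℕ → Ideal B) : Subalgebra B (Polynomial B) :=
  Algebra.adjoin B {p | ∃ n : ℕ, ∃ g ∈ I n, p = C g * X ^ n}

/-- The `r`-th Hasse–Schmidt derivative on `k'[[t]]` (from `t ↦ t + U`), given on
coefficients by `Δ^r(Σ c_n t^n) = Σ C(n+r, r) c_{n+r} t^n`. -/
noncomputable def psHasseDeriv {k' : Type*} [CommRing k'] (r : ℕ) (f : PowerSeries k') :
    PowerSeries k' :=
  PowerSeries.mk fun n => (Nat.choose (n + r) r : k') * PowerSeries.coeff (n + r) f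

theorem psHasseDeriv_zero {k' : Type*} [CommRing k'] (f : PowerSeries k') :
    psHasseDeriv 0 f = f := by
  ext n
  simp [psHasseDeriv]

theorem psHasseDeriv_X_pow {k' : Type*} [CommRing k'] {A r : ℕ} (h : r ≤ A) :
    psHasseDeriv r ((PowerSeries.X : PowerSeries k') ^ A) =
      (Nat.choose A r : k') • (PowerSeries.X : PowerSeries k') ^ (A - r) := by
  ext n
  simp only [psHasseDeriv, PowerSeries.coeff_mk, PowerSeries.coeff_X_pow,
    PowerSeries.coeff_smul, smul_eq_mul]
  by_cases hn : n + r = A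
  · rw [if_pos hn, if_pos (by omega), mul_one, mul_one, hn]
  · rw [if_neg hn, if_neg (by omega), mul_zero, mul_zero]

theorem Nat.sub_mul_le_sub_mul_of_le {A b : ℕ} (r : ℕ) (hbA : b ≤ A) :
    (b - r) * A ≤ (A - r) * b := by
  rw [Nat.sub_mul, Nat.sub_mul, Nat.mul_comm b A]
  exact Nat.sub_le_sub_left (Nat.mul_le_mul_left r hbA) _

theorem div_le_div_sub_of_le {K : Type*} [Field K] [LinearOrder K] [IsStrictOrderedRing K]
    {A b r : ℕ} (hbA : b ≤ A) (hrb : r < b) :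
    (A : K) / b ≤ ((A - r : ℕ) : K) / ((b - r : ℕ) : K) := by
  have hb : (0 : K) < b := by exact_mod_cast (r.zero_le.trans_lt hrb)
  have hbr : (0 : K) < ((b - r : ℕ) : K) := by exact_mod_cast Nat.sub_pos_of_lt hrb
  rw [div_le_div_iff₀ hb hbr]
  exact_mod_cast (Nat.sub_mul_le_sub_mul_of_le r hbA).trans_eq' (Nat.mul_comm _ _)

theorem Nat.apply_mul_le_mul_of_subadditive {a : ℕ → ℕ}
    (hsub : ∀ k s, 1 ≤ k → 1 ≤ s → a (k + s) ≤ a k + a s) {q s : ℕ} (hq : 1 ≤ q) (hs : 1 ≤ s) :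
    a (q * s) ≤ q * a s := by
  induction q, hq using Nat.le_induction with
  | base => simp
  | succ q hq ih =>
    calc a ((q + 1) * s) = a (q * s + s) := by rw [Nat.succ_mul]
      _ ≤ a (q * s) + a s := hsub _ _ (Nat.one_le_iff_ne_zero.mpr (by positivity)) hs
      _ ≤ q * a s + a s := Nat.add_le_add_right ih _
      _ = (q + 1) * a s := (Nat.succ_mul _ _).symm

theorem Subalgebra.isIntegral_iff_isIntegral_adjoin {R B : Type*} [CommRing R] [CommRing B]
    [Algebra R B] {S : Subalgebra R B} {s : Set B} (hS : S ≤ Algebra.adjoin R s)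
    (hs : ∀ x ∈ s, IsIntegral S x) (x : B) :
    IsIntegral S x ↔ IsIntegral (Algebra.adjoin R s) x := by
  let : Algebra S (Algebra.adjoin R s) := (Subalgebra.inclusion hS).toAlgebra
  have := Subalgebra.inclusion.isScalarTower_right hS B
  have hT : Algebra.adjoin R s ≤ (integralClosure S B).restrictScalars R :=
    Algebra.adjoin_le hs
  have : Algebra.IsIntegral S (Algebra.adjoin R s) :=
    ⟨fun t => IsIntegral.tower_bot Subtype.val_injective (hT t.2)⟩
  exact ⟨IsIntegral.tower_top, isIntegral_trans x⟩

theorem C_mul_X_pow_mem_reesAlg {B : Type*} [CommRing B] {I : ℕ → Ideal B} {n : ℕ} {g : B}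
    (hg : g ∈ I n) : C g * X ^ n ∈ ReesAlg I :=
  Algebra.subset_adjoin ⟨n, g, hg, rfl⟩

/-- The generators `Δ^r(t^{a_m}) W^{m-r}`, `0 ≤ r < m`, of `G(𝓖)`. -/
def hasseGenerators (k' : Type*) [CommRing k'] (a : ℕ → ℕ) : Set (PowerSeries k')[X] :=
  {p | ∃ m r : ℕ, 1 ≤ m ∧ r < m ∧
    p = C (psHasseDeriv r ((PowerSeries.X : PowerSeries k') ^ a m)) * X ^ (m - r)}

section MonomialReesAlgebra

variable {k' : Type*} [CommRing k'] {a : ℕ → ℕ} {I : ℕ → Ideal (PowerSeries k')}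

theorem reesAlg_le_adjoin_hasseGenerators
    (hIr : ∀ r, 1 ≤ r → I r = Ideal.span {(PowerSeries.X : PowerSeries k') ^ a r}) :
    ReesAlg I ≤ Algebra.adjoin (PowerSeries k') (hasseGenerators k' a) := by
  refine Algebra.adjoin_le ?_
  rintro _ ⟨n, g, hg, rfl⟩
  rcases Nat.eq_zero_or_pos n with rfl | hn
  · simpa using (Algebra.adjoin (PowerSeries k') (hasseGenerators k' a)).algebraMap_mem g
  obtain ⟨h, rfl⟩ := Ideal.mem_span_singleton.mp (hIr n hn ▸ hg)
  have hgen : C ((PowerSeries.X : PowerSeries k') ^ a n) * X ^ n ∈ hasseGenerators k' a :=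
    ⟨n, 0, hn, hn, by rw [psHasseDeriv_zero, Nat.sub_zero]⟩
  rw [map_mul, mul_comm (C _), mul_assoc]
  exact mul_mem (Subalgebra.algebraMap_mem _ h) (Algebra.subset_adjoin hgen)

theorem isIntegral_reesAlg_of_mem_hasseGenerators (ha : ∀ r, 1 ≤ r → r ≤ a r)
    (hsub : ∀ k s, 1 ≤ k → 1 ≤ s → a (k + s) ≤ a k + a s)
    (hIr : ∀ r, 1 ≤ r → I r = Ideal.span {(PowerSeries.X : PowerSeries k') ^ a r})
    {p : (PowerSeries k')[X]} (hp : p ∈ hasseGenerators k' a) : IsIntegral (ReesAlg I) p := by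
  obtain ⟨m, r, hm, hrm, rfl⟩ := hp
  have hma := ha m hm
  set g : PowerSeries k' := (Nat.choose (a m) r : k') • PowerSeries.X ^ (a m - r)
  have hexp : a ((m - r) * m) ≤ (a m - r) * m :=
    (Nat.apply_mul_le_mul_of_subadditive hsub (by omega) hm).trans
      (Nat.sub_mul_le_sub_mul_of_le r hma)
  have hg : g ^ m ∈ I ((m - r) * m) := by
    rw [hIr _ (Nat.mul_pos (by omega) hm), Ideal.mem_span_singleton, _root_.smul_pow,
      PowerSeries.smul_eq_C_mul, ← pow_mul]
    exact dvd_mul_of_dvd_right (pow_dvd_pow _ hexp) _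
  rw [psHasseDeriv_X_pow (hrm.le.trans hma)]
  refine IsIntegral.of_pow (n := m) hm ?_
  rw [mul_pow, ← map_pow, ← pow_mul]
  exact isIntegral_algebraMap (R := ReesAlg I) (x := ⟨_, C_mul_X_pow_mem_reesAlg hg⟩)

end MonomialReesAlgebra

theorem stmt_11_general (k' : Type*) [Field k'] (a : ℕ → ℕ)
    (ha : ∀ r, 1 ≤ r → r ≤ a r)
    (hsub : ∀ k s, 1 ≤ k → 1 ≤ s → a (k + s) ≤ a k + a s)
    (I : ℕ → Ideal (PowerSeries k'))
    (hIr : ∀ r, 1 ≤ r → I r = Ideal.span {(PowerSeries.X : PowerSeries k') ^ a r})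
    (GG : Subalgebra (PowerSeries k') (Polynomial (PowerSeries k')))
    (hGG : GG = Algebra.adjoin (PowerSeries k')
      {p | ∃ m r : ℕ, 1 ≤ m ∧ r < m ∧
        p = C (psHasseDeriv r ((PowerSeries.X : PowerSeries k') ^ a m)) * X ^ (m - r)}) :
    (∀ A r : ℕ, r ≤ A →
      psHasseDeriv r ((PowerSeries.X : PowerSeries k') ^ A) =
        (Nat.choose A r : k') • (PowerSeries.X : PowerSeries k') ^ (A - r)) ∧
    (∀ A b r : ℕ, b ≤ A → r < b → (A : ℚ) / (b : ℚ) ≤ ((A - r : ℕ) : ℚ) / ((b - r : ℕ) : ℚ)) ∧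
    (∀ p : Polynomial (PowerSeries k'), IsIntegral (ReesAlg I) p ↔ IsIntegral GG p) := by
  subst hGG
  exact ⟨fun _ _ => psHasseDeriv_X_pow, fun _ _ _ => div_le_div_sub_of_le,
    Subalgebra.isIntegral_iff_isIntegral_adjoin (s := hasseGenerators k' a)
      (reesAlg_le_adjoin_hasseGenerators hIr)
      (fun _ => isIntegral_reesAlg_of_mem_hasseGenerators ha hsub hIr)⟩

/-- For `𝓖 = ⊕_{r≥1} (t^{a_r}) W^r ⊆ k'[[t]][W]` with `a_r ≥ r`: the Hasse derivatives
satisfy `Δ^r(t^A) = C(A,r) t^{A-r}`; the slope inequality `(A-r)/(b-r) ≥ A/b` holds for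
`A ≥ b > r`; and `𝓖` and the Diff-algebra `G(𝓖)` generated by all elements
`Δ^r(t^{a_m}) W^{m-r}` have the same integral closure in `k'[[t]][W]`. -/
theorem stmt_11 (k' : Type*) [Field k'] (a : ℕ → ℕ)
    (ha : ∀ r, 1 ≤ r → r ≤ a r)
    (hsub : ∀ k s, 1 ≤ k → 1 ≤ s → a (k + s) ≤ a k + a s)
    (I : ℕ → Ideal (PowerSeries k'))
    (hI0 : I 0 = ⊤)
    (hIr : ∀ r, 1 ≤ r → I r = Ideal.span {(PowerSeries.X : PowerSeries k') ^ a r})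
    (GG : Subalgebra (PowerSeries k') (Polynomial (PowerSeries k')))
    (hGG : GG = Algebra.adjoin (PowerSeries k')
      {p | ∃ m r : ℕ, 1 ≤ m ∧ r < m ∧
        p = C (psHasseDeriv r ((PowerSeries.X : PowerSeries k') ^ a m)) * X ^ (m - r)}) :
    (∀ A r : ℕ, r ≤ A →
      psHasseDeriv r ((PowerSeries.X : PowerSeries k') ^ A) =
        (Nat.choose A r : k') • (PowerSeries.X : PowerSeries k') ^ (A - r)) ∧
    (∀ A b r : ℕ, b ≤ A → r < b → (A : ℚ) / (b : ℚ) ≤ ((A - r : ℕ) : ℚ) / ((b - r : ℕ) : ℚ)) ∧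
    (∀ p : Polynomial (PowerSeries k'), IsIntegral (ReesAlg I) p ↔ IsIntegral GG p) :=
  stmt_11_general k' a ha hsub I hIr GG hGG
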